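/- Let (L, {•_α, ∨_{α,β}, {·,·,·}_{β,γ}, [·,·,·]_{α,β,γ}}) be an NS-Lie-Yamaguti family algebra over a commutative semigroup Ω. Then (L, {[·,·]*_{α,β}, [[·,·,·]]_{α,β,γ}}) is an Ω-Lie-Yamaguti algebra, where [x,y]*_{α,β} = x•_α y − y•_β x + x∨_{α,β}y and [[x,y,z]]_{α,β,γ} = {x,y,z}*_{α,β} + {x,y,z}_{β,γ} − {y,x,z}_{α,γ} + [x,y,z]_{α,β,γ}. -/

import Mathlib

open scoped TensorProduct

section Defs

universe u

variable {L V W Ω : Type*} [AddCommGroup L] [AddCommGroup V] [AddCommGroup W]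

/-- The axioms (5.1)-(5.5) of an `Ω`-Lie-Yamaguti algebra, for a family of
binary operations `bb` and a family of ternary operations `tt`. -/
def IsOmegaLY [Mul Ω] (bb : Ω → Ω → L → L → L)
    (tt : Ω → Ω → Ω → L → L → L → L) : Prop :=
  (∀ α β x y, bb α β x y = - bb β α y x) ∧
  (∀ α β γ x y z, tt α β γ x y z = - tt β α γ y x z) ∧
  (∀ α β γ x y z,
    bb (α*β) γ (bb α β x y) z + bb (β*γ) α (bb β γ y z) x + bb (γ*α) β (bb γ α z x) y +
      tt α β γ x y z + tt β γ α y z x + tt γ α β z x y = 0) ∧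
  (∀ α β γ ς x y z a,
    tt (α*β) γ ς (bb α β x y) z a + tt (β*γ) α ς (bb β γ y z) x a +
      tt (γ*α) β ς (bb γ α z x) y a = 0) ∧
  (∀ α β γ ς a x y z,
    tt ς α (β*γ) a x (bb β γ y z) =
      bb (ς*α*β) γ (tt ς α β a x y) z + bb β (ς*α*γ) y (tt ς α γ a x z)) ∧
  (∀ α β γ ς τ a c x y z,
    tt ς τ (α*β*γ) a c (tt α β γ x y z) =
      tt (ς*τ*α) β γ (tt ς τ α a c x) y z + tt α (ς*τ*β) γ x (tt ς τ β a c y) z +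
        tt α β (ς*τ*γ) x y (tt ς τ γ a c z))

/-- A Lie-Yamaguti algebra structure: skew-symmetric binary bracket `b`, ternary
bracket `t` skew-symmetric in its first two arguments, satisfying (2.1)-(2.4). -/
def IsLieYamaguti (b : L → L → L) (t : L → L → L → L) : Prop :=
  IsOmegaLY (Ω := PUnit.{u + 1}) (fun _ _ => b) (fun _ _ _ => t)

/-- The operator `D(x,y) = θ(y,x) - θ(x,y) - ρ([x,y]) + ρ(x)ρ(y) - ρ(y)ρ(x)`. -/
def Dmap (b : L → L → L) (ρ : L → V → V) (θ : L → L → V → V)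
    (x y : L) (v : V) : V :=
  θ y x v - θ x y v - ρ (b x y) v + ρ x (ρ y v) - ρ y (ρ x v)

/-- The family version of `D` for representations of `Ω`-Lie-Yamaguti algebras (5.11). -/
def DmapΩ [Mul Ω] (bb : Ω → Ω → V → V → V) (ρf : Ω → Ω → V → W → W)
    (θf : Ω → Ω → Ω → V → V → W → W) (α β ς : Ω) (u v : V) (w : W) : W :=
  θf β α ς v u w - θf α β ς u v w - ρf (α*β) ς (bb α β u v) w +
    ρf α (β*ς) u (ρf β ς v w) - ρf β (α*ς) v (ρf α ς u w)

/-- The axioms (5.6)-(5.10) of a representation of an `Ω`-Lie-Yamaguti algebra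
`(V, bb, tt)` on `W`. -/
def IsOmegaLYRep [Mul Ω] (bb : Ω → Ω → V → V → V) (tt : Ω → Ω → Ω → V → V → V → V)
    (ρf : Ω → Ω → V → W → W) (θf : Ω → Ω → Ω → V → V → W → W) : Prop :=
  (∀ α β γ ς x y z u, θf (α*β) γ ς (bb α β x y) z u
      - θf α γ (β*ς) x z (ρf β ς y u) + θf β γ (α*ς) y z (ρf α ς x u) = 0) ∧
  (∀ α β γ ς x y z u, DmapΩ bb ρf θf α β (γ*ς) x y (ρf γ ς z u)
      - ρf γ (α*β*ς) z (DmapΩ bb ρf θf α β ς x y u)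
      - ρf (α*β*γ) ς (tt α β γ x y z) u = 0) ∧
  (∀ α β γ ς x y z u, θf α (β*γ) ς x (bb β γ y z) u
      - ρf β (α*γ*ς) y (θf α γ ς x z u) + ρf γ (α*β*ς) z (θf α β ς x y u) = 0) ∧
  (∀ α β γ ς τ a x y z u, DmapΩ bb ρf θf τ α (β*γ*ς) a x (θf β γ ς y z u)
      - θf β γ (τ*α*ς) y z (DmapΩ bb ρf θf τ α ς a x u)
      - θf (τ*α*β) γ ς (tt τ α β a x y) z u
      - θf β (τ*α*γ) ς y (tt τ α γ a x z) u = 0) ∧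
  (∀ α β γ ς τ a x y z u, θf τ (α*β*γ) ς a (tt α β γ x y z) u
      - θf β γ (τ*α*ς) y z (θf τ α ς a x u)
      + θf α γ (τ*β*ς) x z (θf τ β ς a y u)
      - DmapΩ bb ρf θf α β (τ*γ*ς) x y (θf τ γ ς a z u) = 0)

/-- A representation of a Lie-Yamaguti algebra `(L, b, t)` on `V`:
the axioms (2.5)-(2.9). -/
def IsLYRep (b : L → L → L) (t : L → L → L → L)
    (ρ : L → V → V) (θ : L → L → V → V) : Prop :=
  IsOmegaLYRep (Ω := PUnit.{u + 1}) (fun _ _ => b) (fun _ _ _ => t)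
    (fun _ _ => ρ) (fun _ _ _ => θ)

/-- A `(2,3)`-cocycle `(Γ₁, Γ₂)` of a Lie-Yamaguti algebra `(L, b, t)` with
coefficients in the representation `(V; ρ, θ)`: conditions (2.14)-(2.17). -/
def Is23Cocycle (b : L → L → L) (t : L → L → L → L) (ρ : L → V → V)
    (θ : L → L → V → V) (Γ₁ : L → L → V) (Γ₂ : L → L → L → V) : Prop :=
  (∀ x y z, -(ρ x (Γ₁ y z)) - ρ y (Γ₁ z x) - ρ z (Γ₁ x y)
      + Γ₁ (b x y) z + Γ₁ (b y z) x + Γ₁ (b z x) y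
      + Γ₂ x y z + Γ₂ y z x + Γ₂ z x y = 0) ∧
  (∀ x₁ y₁ x₂ y₂, θ x₁ y₂ (Γ₁ y₁ x₂) + θ y₁ y₂ (Γ₁ x₂ x₁) + θ x₂ y₂ (Γ₁ x₁ y₁)
      + Γ₂ (b x₁ y₁) x₂ y₂ + Γ₂ (b y₁ x₂) x₁ y₂ + Γ₂ (b x₂ x₁) y₁ y₂ = 0) ∧
  (∀ x₁ y₁ x₂ y₂, -(ρ x₂ (Γ₂ x₁ y₁ y₂)) + ρ y₂ (Γ₂ x₁ y₁ x₂) + Γ₂ x₁ y₁ (b x₂ y₂)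
      + Dmap b ρ θ x₁ y₁ (Γ₁ x₂ y₂) - Γ₁ (t x₁ y₁ x₂) y₂ - Γ₁ x₂ (t x₁ y₁ y₂) = 0) ∧
  (∀ x₁ y₁ x₂ y₂ z, -(θ y₂ z (Γ₂ x₁ y₁ x₂)) + θ x₂ z (Γ₂ x₁ y₁ y₂)
      + Dmap b ρ θ x₁ y₁ (Γ₂ x₂ y₂ z) - Dmap b ρ θ x₂ y₂ (Γ₂ x₁ y₁ z)
      - Γ₂ (t x₁ y₁ x₂) y₂ z - Γ₂ x₂ (t x₁ y₁ y₂) z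
      + Γ₂ x₁ y₁ (t x₂ y₂ z) - Γ₂ x₂ y₂ (t x₁ y₁ z) = 0)

/-- A `Γ`-twisted Rota-Baxter family `{T_α}_{α ∈ Ω}` on a representation
`(V; ρ, θ)` of a Lie-Yamaguti algebra `(L, b, t)`: identities (3.1)-(3.2). -/
def IsTwistedRBFamily [Mul Ω] (b : L → L → L) (t : L → L → L → L)
    (ρ : L → V → V) (θ : L → L → V → V) (Γ₁ : L → L → V) (Γ₂ : L → L → L → V)
    (T : Ω → V → L) : Prop :=
  (∀ α β u v, b (T α u) (T β v)
      = T (α*β) (ρ (T α u) v - ρ (T β v) u + Γ₁ (T α u) (T β v))) ∧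
  (∀ α β γ u v w, t (T α u) (T β v) (T γ w)
      = T (α*β*γ) (Dmap b ρ θ (T α u) (T β v) w - θ (T α u) (T γ w) v
          + θ (T β v) (T γ w) u + Γ₂ (T α u) (T β v) (T γ w)))

/-- A generalized Reynolds operator: a `Γ`-twisted Rota-Baxter family indexed by
the trivial semigroup. -/
def IsGenReynolds (b : L → L → L) (t : L → L → L → L)
    (ρ : L → V → V) (θ : L → L → V → V) (Γ₁ : L → L → V) (Γ₂ : L → L → L → V)
    (T : V → L) : Prop :=
  IsTwistedRBFamily (Ω := PUnit.{u + 1}) b t ρ θ Γ₁ Γ₂ (fun _ => T)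

/-- The derived bracket `[x,y]*_{α,β} = x •_α y - y •_β x + x ∨_{α,β} y` (4.25). -/
def nsStarB [Mul Ω] (bul : Ω → L → L → L) (vee : Ω → Ω → L → L → L)
    (α β : Ω) (x y : L) : L :=
  bul α x y - bul β y x + vee α β x y

/-- The derived operation `{x,y,z}*_{α,β}` (4.26). -/
def nsStarT [Mul Ω] (bul : Ω → L → L → L) (vee : Ω → Ω → L → L → L)
    (tr : Ω → Ω → L → L → L → L) (α β : Ω) (x y z : L) : L :=
  tr β α z y x - tr α β z x y + bul α x (bul β y z) - bul β y (bul α x z)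
    - bul (α*β) (nsStarB bul vee α β x y) z

/-- The derived operation `[[x,y,z]]_{α,β,γ}` (4.27). -/
def nsDbr [Mul Ω] (bul : Ω → L → L → L) (vee : Ω → Ω → L → L → L)
    (tr : Ω → Ω → L → L → L → L) (br : Ω → Ω → Ω → L → L → L → L)
    (α β γ : Ω) (x y z : L) : L :=
  nsStarT bul vee tr α β x y z + tr β γ x y z - tr α γ y x z + br α β γ x y z

/-- An NS-Lie-Yamaguti family algebra: the skew-symmetry conditions together with
axioms (4.16)-(4.24). -/
def IsNSLYFamily [Mul Ω] (bul : Ω → L → L → L) (vee : Ω → Ω → L → L → L)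
    (tr : Ω → Ω → L → L → L → L) (br : Ω → Ω → Ω → L → L → L → L) : Prop :=
  (∀ α β x y, vee α β x y = - vee β α y x) ∧
  (∀ α β γ x y z, br α β γ x y z = - br β α γ y x z) ∧
  -- (4.16)
  (∀ α β γ x y z a, tr (α*β) γ a (nsStarB bul vee α β x y) z
      - tr α γ (bul β y a) x z + tr β γ (bul α x a) y z = 0) ∧
  -- (4.17)
  (∀ α β γ x y z a, nsStarT bul vee tr α β x y (bul γ z a)
      - bul γ z (nsStarT bul vee tr α β x y a)
      - bul (α*β*γ) (nsDbr bul vee tr br α β γ x y z) a = 0) ∧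
  -- (4.18)
  (∀ α β γ x y z a, tr α (β*γ) a x (nsStarB bul vee β γ y z)
      - bul β y (tr α γ a x z) + bul γ z (tr α β a x y) = 0) ∧
  -- (4.19)
  (∀ α β γ ς x y z a c, nsStarT bul vee tr α β x y (tr γ ς c z a)
      - tr γ ς (nsStarT bul vee tr α β x y c) z a
      - tr (α*β*γ) ς c (nsDbr bul vee tr br α β γ x y z) a
      - tr γ (α*β*ς) c z (nsDbr bul vee tr br α β ς x y a) = 0) ∧
  -- (4.20)
  (∀ α β γ ς x y z a c, tr α (β*γ*ς) c x (nsDbr bul vee tr br β γ ς y z a)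
      - tr γ ς (tr α β c x y) z a + tr β ς (tr α γ c x z) y a
      - nsStarT bul vee tr β γ y z (tr α ς c x a) = 0) ∧
  -- (4.21)
  (∀ α β γ x y z, vee (α*β) γ (nsStarB bul vee α β x y) z
      + vee (β*γ) α (nsStarB bul vee β γ y z) x
      + vee (γ*α) β (nsStarB bul vee γ α z x) y
      - bul γ z (vee α β x y) - bul α x (vee β γ y z) - bul β y (vee γ α z x)
      + br α β γ x y z + br β γ α y z x + br γ α β z x y = 0) ∧
  -- (4.22)
  (∀ α β γ ς x y z a, tr γ ς (vee α β x y) z a + tr α ς (vee β γ y z) x a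
      + tr β ς (vee γ α z x) y a
      + br (α*β) γ ς (nsStarB bul vee α β x y) z a
      + br (β*γ) α ς (nsStarB bul vee β γ y z) x a
      + br (γ*α) β ς (nsStarB bul vee γ α z x) y a = 0) ∧
  -- (4.23)
  (∀ α β γ ς x y z a, -(bul γ z (br α β ς x y a)) + bul ς a (br α β γ x y z)
      + br α β (γ*ς) x y (nsStarB bul vee γ ς z a)
      + nsStarT bul vee tr α β x y (vee γ ς z a)
      - vee (α*β*γ) ς (nsDbr bul vee tr br α β γ x y z) a
      - vee γ (α*β*ς) z (nsDbr bul vee tr br α β ς x y a) = 0) ∧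
  -- (4.24)
  (∀ α β γ ς τ x y z a c, -(tr ς τ (br α β γ x y z) a c)
      + tr γ τ (br α β ς x y a) z c
      + nsStarT bul vee tr α β x y (br γ ς τ z a c)
      - nsStarT bul vee tr γ ς z a (br α β τ x y c)
      - br (α*β*γ) ς τ (nsDbr bul vee tr br α β γ x y z) a c
      - br γ (α*β*ς) τ z (nsDbr bul vee tr br α β ς x y a) c
      + br α β (γ*ς*τ) x y (nsDbr bul vee tr br γ ς τ z a c)
      - br γ ς (α*β*τ) z a (nsDbr bul vee tr br α β τ x y c) = 0)

/-- An NS-Lie-Yamaguti algebra: the family version over a trivial index semigroup,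
i.e. the axioms (4.1)-(4.9). -/
def IsNSLY (bu : L → L → L) (ve : L → L → L) (tr3 : L → L → L → L)
    (br3 : L → L → L → L) : Prop :=
  IsNSLYFamily (Ω := PUnit.{u + 1}) (fun _ => bu) (fun _ _ => ve)
    (fun _ _ => tr3) (fun _ _ _ => br3)

/-- Degree-0 coboundary: `(∂(a,c))_α(u) = T_α(D(a,c)u + Γ₂(a,c,T_α u)) - {a,c,T_α u}` (6.1). -/
def cobound0 [Mul Ω] (b : L → L → L) (t : L → L → L → L)
    (ρ : L → V → V) (θ : L → L → V → V) (Γ₂ : L → L → L → V)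
    (T : Ω → V → L) (a c : L) (α : Ω) (u : V) : L :=
  T α (Dmap b ρ θ a c u + Γ₂ a c (T α u)) - t a c (T α u)

/-- First component `∂_{Ω,I}` of the coboundary of a degree-1 cochain `f`. -/
def coboundI [Mul Ω] (b : L → L → L) (ρ : L → V → V) (Γ₁ : L → L → V)
    (T : Ω → V → L) (f : Ω → V → L) (α β : Ω) (u v : V) : L :=
  b (T α u) (f β v) + T (α*β) (ρ (f β v) u + Γ₁ (f β v) (T α u))
    - b (T β v) (f α u) - T (β*α) (ρ (f α u) v + Γ₁ (f α u) (T β v))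
    - f (α*β) (ρ (T α u) v - ρ (T β v) u + Γ₁ (T α u) (T β v))

/-- Second component `∂_{Ω,II}` of the coboundary of a degree-1 cochain `f`. -/
def coboundII [Mul Ω] (b : L → L → L) (t : L → L → L → L)
    (ρ : L → V → V) (θ : L → L → V → V) (Γ₂ : L → L → L → V)
    (T : Ω → V → L) (f : Ω → V → L) (α β γ : Ω) (u v w : V) : L :=
  t (T α u) (T β v) (f γ w)
    - T (α*β*γ) (θ (T β v) (f γ w) u - θ (T α u) (f γ w) v
        + Γ₂ (T α u) (T β v) (f γ w))
    + t (f α u) (T β v) (T γ w)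
    - T (α*β*γ) (Dmap b ρ θ (f α u) (T β v) w - θ (f α u) (T γ w) v
        + Γ₂ (f α u) (T β v) (T γ w))
    - t (f β v) (T α u) (T γ w)
    + T (β*α*γ) (Dmap b ρ θ (f β v) (T α u) w - θ (f β v) (T γ w) u
        + Γ₂ (f β v) (T α u) (T γ w))
    - f (α*β*γ) (Dmap b ρ θ (T α u) (T β v) w + θ (T β v) (T γ w) u
        - θ (T α u) (T γ w) v + Γ₂ (T α u) (T β v) (T γ w))

end Defs

/-!
Every axiom of the derived structure becomes, after expanding `[·,·]*`, `{·,·,·}*` and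
`[[·,·,·]]` by multilinearity and normalising the products of indices in the commutative
semigroup `Ω`, an integer linear combination of instances of the NS axioms (4.16)-(4.24).
The last one, the derivation property of `[[a,c,·]]` on `[[·,·,·]]`, additionally uses the
derivation property of `[[a,x,·]]` on `[·,·]*`.
-/

theorem nsStarB_antisymm {L Ω : Type*} [AddCommGroup L] [Mul Ω]
    {bul : Ω → L → L → L} {vee : Ω → Ω → L → L → L}
    (hvee : ∀ α β x y, vee α β x y = -vee β α y x) (α β : Ω) (x y : L) :
    nsStarB bul vee α β x y = -nsStarB bul vee β α y x := by
  simp only [nsStarB, hvee α β x y]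
  abel

section NSFamily

variable {R L Ω : Type*} [CommSemiring R] [AddCommGroup L] [Module R L] [CommSemigroup Ω]
  {bul : Ω → L →ₗ[R] L →ₗ[R] L} {vee : Ω → Ω → L →ₗ[R] L →ₗ[R] L}
  {tr : Ω → Ω → L →ₗ[R] L →ₗ[R] L →ₗ[R] L}
  {br : Ω → Ω → Ω → L →ₗ[R] L →ₗ[R] L →ₗ[R] L}

local notation "starB" => nsStarB (fun α x y => bul α x y) (fun α β x y => vee α β x y)

local notation "dbr" => nsDbr (fun α x y => bul α x y) (fun α β x y => vee α β x y)
  (fun β γ x y z => tr β γ x y z) (fun α β γ x y z => br α β γ x y z)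

local notation "nsFamily" => IsNSLYFamily (fun α x y => bul α x y)
  (fun α β x y => vee α β x y) (fun β γ x y z => tr β γ x y z)
  (fun α β γ x y z => br α β γ x y z)

theorem nsDbr_antisymm (hNS : nsFamily) (α β γ : Ω) (x y z : L) :
    dbr α β γ x y z = -dbr β α γ y x z := by
  obtain ⟨hvee, hbr, -⟩ := hNS
  linear_combination (norm := skip)
    hbr α β γ x y z - congrArg (fun m => bul (α*β) m z) (hvee α β x y)
  simp only [nsDbr, nsStarT, nsStarB, map_add, map_sub, map_neg, LinearMap.add_apply,
    LinearMap.sub_apply, LinearMap.neg_apply, mul_comm]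
  abel

theorem nsStarB_nsDbr_jacobi (hNS : nsFamily) (α β γ : Ω) (x y z : L) :
    starB (α*β) γ (starB α β x y) z + starB (β*γ) α (starB β γ y z) x +
      starB (γ*α) β (starB γ α z x) y +
      dbr α β γ x y z + dbr β γ α y z x + dbr γ α β z x y = 0 := by
  obtain ⟨-, -, -, -, -, -, -, h21, -⟩ := hNS
  linear_combination (norm := skip) h21 α β γ x y z
  simp only [nsDbr, nsStarT, nsStarB, map_add, map_sub, LinearMap.add_apply,
    LinearMap.sub_apply, mul_comm]
  abel

theorem nsDbr_nsStarB_cyclic (hNS : nsFamily) (α β γ ς : Ω) (x y z a : L) :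
    dbr (α*β) γ ς (starB α β x y) z a + dbr (β*γ) α ς (starB β γ y z) x a +
      dbr (γ*α) β ς (starB γ α z x) y a = 0 := by
  obtain ⟨-, -, h16, h17, h18, -, -, h21, h22, -⟩ := hNS
  linear_combination (norm := skip) h22 α β γ ς x y z a
    - h16 α β ς x y a z - h16 β γ ς y z a x - h16 γ α ς z x a y
    - h16 α β γ x y z a - h16 β γ α y z x a - h16 γ α β z x y a
    - h17 α β γ x y z a - h17 β γ α y z x a - h17 γ α β z x y a
    + h18 α β γ x y z a + h18 β γ α y z x a + h18 γ α β z x y a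
    - congrArg (fun m => bul (α*β*γ) m a) (h21 α β γ x y z)
  simp only [nsDbr, nsStarT, nsStarB, map_add, map_sub, map_zero, LinearMap.add_apply,
    LinearMap.sub_apply, LinearMap.zero_apply, mul_comm, mul_left_comm]
  abel

theorem nsDbr_derivation_nsStarB (hNS : nsFamily) (α β γ ς : Ω) (a x y z : L) :
    dbr ς α (β*γ) a x (starB β γ y z) =
      starB (ς*α*β) γ (dbr ς α β a x y) z + starB β (ς*α*γ) y (dbr ς α γ a x z) := by
  obtain ⟨-, -, -, h17, h18, -, -, -, -, h23, -⟩ := hNS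
  linear_combination (norm := skip) h23 ς α β γ a x y z
    + h17 ς α β a x y z - h17 ς α γ a x z y - h18 ς β γ a y z x + h18 α β γ x y z a
  simp only [nsDbr, nsStarT, nsStarB, map_add, map_sub, LinearMap.add_apply,
    LinearMap.sub_apply, mul_comm, mul_left_comm]
  abel

set_option maxHeartbeats 1000000 in
theorem nsDbr_derivation_nsDbr (hNS : nsFamily) (α β γ ς τ : Ω) (a c x y z : L) :
    dbr ς τ (α*β*γ) a c (dbr α β γ x y z) =
      dbr (ς*τ*α) β γ (dbr ς τ α a c x) y z + dbr α (ς*τ*β) γ x (dbr ς τ β a c y) z +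
        dbr α β (ς*τ*γ) x y (dbr ς τ γ a c z) := by
  have h55 := nsDbr_derivation_nsStarB hNS τ α β ς a c x y
  obtain ⟨-, -, -, h17, -, h19, h20, -, -, -, h24⟩ := hNS
  linear_combination (norm := skip) h24 ς τ α β γ a c x y z
    - congrArg (fun m => bul (ς*τ*α*β) m z) h55
    + h17 ς τ α a c x (bul β y z) - h17 ς τ β a c y (bul α x z)
    - h17 ς τ (α*β) a c (starB α β x y) z
    + congrArg (fun m => bul α x m) (h17 ς τ β a c y z)
    - congrArg (fun m => bul β y m) (h17 ς τ α a c x z)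
    + h19 ς τ β γ a c y z x - h19 ς τ α γ a c x z y
    + h19 ς τ β α a c y x z - h19 ς τ α β a c x y z
    - h20 ς α β γ a x y z c + h20 τ α β γ c x y z a
  simp only [nsDbr, nsStarT, nsStarB, map_add, map_sub, map_zero, LinearMap.add_apply,
    LinearMap.sub_apply, mul_comm, mul_left_comm]
  abel

end NSFamily

/-- An NS-Lie-Yamaguti family algebra gives an Ω-Lie-Yamaguti
algebra via the derived brackets `[·,·]*_{α,β}` and `[[·,·,·]]_{α,β,γ}`. -/
theorem nsFamily_to_omegaLY {K L Ω : Type*} [Field K] [AddCommGroup L]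
    [Module K L] [CommSemigroup Ω]
    (bul : Ω → L →ₗ[K] L →ₗ[K] L) (vee : Ω → Ω → L →ₗ[K] L →ₗ[K] L)
    (tr : Ω → Ω → L →ₗ[K] L →ₗ[K] L →ₗ[K] L)
    (br : Ω → Ω → Ω → L →ₗ[K] L →ₗ[K] L →ₗ[K] L)
    (hNS : IsNSLYFamily (fun α x y => bul α x y) (fun α β x y => vee α β x y)
      (fun β γ x y z => tr β γ x y z) (fun α β γ x y z => br α β γ x y z)) :
    IsOmegaLY
      (nsStarB (fun α x y => bul α x y) (fun α β x y => vee α β x y))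
      (nsDbr (fun α x y => bul α x y) (fun α β x y => vee α β x y)
        (fun β γ x y z => tr β γ x y z) (fun α β γ x y z => br α β γ x y z)) :=
  ⟨nsStarB_antisymm hNS.1, nsDbr_antisymm hNS, nsStarB_nsDbr_jacobi hNS,
    nsDbr_nsStarB_cyclic hNS, nsDbr_derivation_nsStarB hNS, nsDbr_derivation_nsDbr hNS⟩
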